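/- arXiv:2405.16045 — 2 statements merged into one kernel-verified Lean document; each statement's English description precedes it below -/
import Mathlib

section
/- Let I = [a,b] ⊂ ℝ with a < b, let γ > 0, ε ∈ (0,1), c > 0. Let K : I → ℝ and H : I → ℝ be measurable with 0 < K_0 ≤ K(x) ≤ K_1 and 0 ≤ H(x) ≤ H_1, let k² : I → ℝ be measurable, and define the strip θ^ε = {(x,y) ∈ ℝ² : x ∈ I, ε(k²(x) − ε^γ H(x)) < y < ε k²(x)}. Let f ∈ L²(θ^ε) satisfy (1/ε^{γ+1}) ∫_{θ^ε} f² dx dy ≤ c, and define f̂ : I → ℝ by f̂(x) = (1/(ε K(x))) ∫_{ε(k²(x) − ε^γ H(x))}^{ε k²(x)} f(x,y) dy. Suppose ŵ : I → ℝ is continuously differentiable and satisfies the energy identity ∫_I K(x) ( ŵ'(x)² + ŵ(x)² ) dx = (1/ε^γ) ∫_I K(x) f̂(x) ŵ(x) dx. Then ( ∫_I ( ŵ'(x)² + ŵ(x)² ) dx )^{1/2} ≤ (c H_1)^{1/2} / K_0; in particular the bound is independent of ε. -/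
open MeasureTheory Set

/-!
Write `E = ∫_I (ŵ'² + ŵ²)` and `P = ε^{γ+1}`. Since `K ≥ K₀`, the energy identity gives
`K₀ E ≤ ε^{-γ} ∫_I K f̂ ŵ`, and by Fubini the right-hand side is `P⁻¹ ∫_{θ^ε} f(x,y) ŵ(x)`.
Cauchy–Schwarz on the strip bounds this by `P⁻¹ ‖f‖_{L²(θ^ε)} ‖ŵ ∘ fst‖_{L²(θ^ε)}`, and each factor
contributes `√P`: the first by hypothesis (`‖f‖² ≤ c P`), the second because the strip has
vertical thickness `P H ≤ P H₁` (`‖ŵ ∘ fst‖² ≤ P H₁ E`). Hence `K₀ E ≤ √(c H₁) √E`, uniformly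
in `ε`.
-/

section regionBetween

variable {α : Type*} {f g : α → ℝ} {s : Set α}

theorem indicator_regionBetween_apply (G : α × ℝ → ℝ) (x : α) (y : ℝ) :
    (regionBetween f g s).indicator G (x, y) =
      s.indicator (fun x => (Ioo (f x) (g x)).indicator (fun y => G (x, y)) y) x := by
  by_cases hx : x ∈ s <;> by_cases hy : y ∈ Ioo (f x) (g x) <;>
    simp only [indicator, regionBetween, mem_ofPred_eq, hx, hy, and_true, and_false, if_true,
      if_false]

variable [MeasurableSpace α] {μ : Measure α} [SFinite μ]

theorem setIntegral_regionBetween (hf : Measurable f) (hg : Measurable g) (hs : MeasurableSet s)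
    {G : α × ℝ → ℝ} (hG : IntegrableOn G (regionBetween f g s) (μ.prod volume)) :
    ∫ p in regionBetween f g s, G p ∂(μ.prod volume) =
      ∫ x in s, (∫ y in Ioo (f x) (g x), G (x, y)) ∂μ := by
  have hR := measurableSet_regionBetween hf hg hs
  rw [← integral_indicator hR, integral_prod _ ((integrable_indicator_iff hR).2 hG),
    ← integral_indicator hs]
  congr 1 with x
  by_cases hx : x ∈ s <;>
    simp [indicator_regionBetween_apply, hx, integral_indicator measurableSet_Ioo]

theorem setIntegral_regionBetween_comp_fst (hf : Measurable f) (hg : Measurable g)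
    (hs : MeasurableSet s) (hfg : ∀ x ∈ s, f x ≤ g x) {φ : α → ℝ}
    (hφ : IntegrableOn (fun p => φ p.1) (regionBetween f g s) (μ.prod volume)) :
    ∫ p in regionBetween f g s, φ p.1 ∂(μ.prod volume) = ∫ x in s, (g x - f x) * φ x ∂μ := by
  rw [setIntegral_regionBetween hf hg hs hφ]
  refine setIntegral_congr_fun hs fun x hx => ?_
  simp [Real.volume_real_Ioo_of_le (hfg x hx)]

theorem setIntegral_regionBetween_comp_fst_le (hf : Measurable f) (hg : Measurable g)
    (hs : MeasurableSet s) (hfg : ∀ x ∈ s, f x ≤ g x) {C : ℝ} (hC : ∀ x ∈ s, g x - f x ≤ C)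
    {φ ψ : α → ℝ} (hφ : IntegrableOn (fun p => φ p.1) (regionBetween f g s) (μ.prod volume))
    (hφ₀ : ∀ x ∈ s, 0 ≤ φ x) (hφψ : ∀ x ∈ s, φ x ≤ ψ x) (hψ : IntegrableOn ψ s μ) :
    ∫ p in regionBetween f g s, φ p.1 ∂(μ.prod volume) ≤ C * ∫ x in s, ψ x ∂μ := by
  rw [setIntegral_regionBetween_comp_fst hf hg hs hfg hφ, ← integral_const_mul]
  refine integral_mono_of_nonneg ?_ (hψ.const_mul C) ?_ <;>
    refine (ae_restrict_iff' hs).2 (ae_of_all _ fun x hx => ?_)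
  · exact mul_nonneg (sub_nonneg.2 (hfg x hx)) (hφ₀ x hx)
  · have hC₀ : 0 ≤ C := (sub_nonneg.2 (hfg x hx)).trans (hC x hx)
    calc (g x - f x) * φ x ≤ C * φ x := mul_le_mul_of_nonneg_right (hC x hx) (hφ₀ x hx)
      _ ≤ C * ψ x := mul_le_mul_of_nonneg_left (hφψ x hx) hC₀

theorem setIntegral_regionBetween_comp_fst_mul (hf : Measurable f) (hg : Measurable g)
    (hs : MeasurableSet s) (hfg : ∀ x ∈ s, f x ≤ g x) {φ : α → ℝ} {F : α × ℝ → ℝ}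
    (hφF : IntegrableOn (fun p => φ p.1 * F p) (regionBetween f g s) (μ.prod volume)) :
    ∫ p in regionBetween f g s, φ p.1 * F p ∂(μ.prod volume) =
      ∫ x in s, φ x * (∫ y in f x..g x, F (x, y)) ∂μ := by
  rw [setIntegral_regionBetween hf hg hs hφF]
  refine setIntegral_congr_fun hs fun x hx => ?_
  rw [intervalIntegral.integral_of_le (hfg x hx), integral_Ioc_eq_integral_Ioo,
    ← integral_const_mul]

theorem volume_regionBetween_lt_top (hf : AEMeasurable f (μ.restrict s))
    (hg : AEMeasurable g (μ.restrict s)) (hs : MeasurableSet s) (hμs : μ s ≠ ⊤) {C : ℝ}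
    (hfg : ∀ x ∈ s, g x - f x ≤ C) : μ.prod volume (regionBetween f g s) < ⊤ := by
  rw [volume_regionBetween_eq_lintegral hf hg hs]
  calc ∫⁻ x in s, ENNReal.ofReal ((g - f) x) ∂μ ≤ ∫⁻ _ in s, ENNReal.ofReal C ∂μ :=
        setLIntegral_mono measurable_const fun x hx => ENNReal.ofReal_le_ofReal (hfg x hx)
    _ = ENNReal.ofReal C * μ s := setLIntegral_const s _
    _ < ⊤ := ENNReal.mul_lt_top ENNReal.ofReal_lt_top hμs.lt_top

end regionBetween

theorem memLp_comp_fst_regionBetween {f g φ : ℝ → ℝ} {s : Set ℝ} {C : ℝ} (hf : Measurable f)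
    (hg : Measurable g) (hs : IsCompact s) (hfg : ∀ x ∈ s, g x - f x ≤ C)
    (hφ : ContinuousOn φ s) (p : ENNReal) :
    MemLp (fun q : ℝ × ℝ => φ q.1) p (volume.restrict (regionBetween f g s)) := by
  have hR := measurableSet_regionBetween hf hg hs.measurableSet
  have : IsFiniteMeasure (volume.restrict (regionBetween f g s)) :=
    ⟨by rw [Measure.restrict_apply_univ]
        exact volume_regionBetween_lt_top hf.aemeasurable hg.aemeasurable hs.measurableSet
          hs.measure_lt_top.ne hfg⟩
  obtain ⟨M, hM⟩ := hs.exists_bound_of_continuousOn hφ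
  exact MemLp.of_bound
    ((hφ.comp continuous_fst.continuousOn fun q hq => hq.1).aestronglyMeasurable hR) M
    ((ae_restrict_iff' hR).2 (ae_of_all _ fun q hq => hM q.1 hq.1))

theorem mul_setIntegral_le_setIntegral_mul {α : Type*} [MeasurableSpace α] {μ : Measure α}
    {s : Set α} {K v : α → ℝ} {k₀ k₁ : ℝ} (hs : MeasurableSet s) (hv : IntegrableOn v s μ)
    (hK : AEStronglyMeasurable K (μ.restrict s)) (hk₀ : 0 ≤ k₀)
    (hKbd : ∀ x ∈ s, k₀ ≤ K x ∧ K x ≤ k₁) (hv₀ : ∀ x ∈ s, 0 ≤ v x) :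
    k₀ * ∫ x in s, v x ∂μ ≤ ∫ x in s, K x * v x ∂μ := by
  have hKv : IntegrableOn (fun x => K x * v x) s μ := by
    refine hv.bdd_mul (c := k₁) hK ((ae_restrict_iff' hs).2 (ae_of_all _ fun x hx => ?_))
    rw [Real.norm_eq_abs, abs_of_nonneg (hk₀.trans (hKbd x hx).1)]
    exact (hKbd x hx).2
  rw [← integral_const_mul]
  exact setIntegral_mono_on (hv.const_mul k₀) hKv hs
    fun x hx => mul_le_mul_of_nonneg_right (hKbd x hx).1 (hv₀ x hx)

theorem sq_integral_mul_le_integral_sq_mul_integral_sq {α : Type*} [MeasurableSpace α]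
    {μ : Measure α} {f g : α → ℝ} (hf : MemLp f 2 μ) (hg : MemLp g 2 μ) :
    (∫ x, f x * g x ∂μ) ^ 2 ≤ (∫ x, f x ^ 2 ∂μ) * ∫ x, g x ^ 2 ∂μ := by
  have hHolder := integral_mul_le_Lp_mul_Lq_of_nonneg Real.HolderConjugate.two_two
    (ae_of_all μ fun x => abs_nonneg (f x)) (ae_of_all μ fun x => abs_nonneg (g x))
    (by rw [ENNReal.ofReal_ofNat]; exact hf.abs) (by rw [ENNReal.ofReal_ofNat]; exact hg.abs)
  have hsq : ∀ r : ℝ, |r| ^ (2 : ℝ) = r ^ 2 := fun r => by norm_cast; exact sq_abs r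
  simp only [hsq, ← Real.sqrt_eq_rpow] at hHolder
  calc (∫ x, f x * g x ∂μ) ^ 2 ≤ (∫ x, |f x| * |g x| ∂μ) ^ 2 := by
        rw [← sq_abs]
        gcongr
        simpa [abs_mul] using abs_integral_le_integral_abs (f := fun x => f x * g x)
    _ ≤ (√(∫ x, f x ^ 2 ∂μ) * √(∫ x, g x ^ 2 ∂μ)) ^ 2 := by
        gcongr
    _ = (∫ x, f x ^ 2 ∂μ) * ∫ x, g x ^ 2 ∂μ := by
        rw [mul_pow, Real.sq_sqrt (integral_nonneg fun x => sq_nonneg _),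
          Real.sq_sqrt (integral_nonneg fun x => sq_nonneg _)]

theorem sqrt_le_sqrt_div_of_sq_mul_sq_le {k E X : ℝ} (hk : 0 < k) (hE : 0 ≤ E)
    (h : k ^ 2 * E ^ 2 ≤ X * E) : √E ≤ √X / k := by
  rcases hE.eq_or_lt with rfl | hE
  · simpa using div_nonneg (Real.sqrt_nonneg X) hk.le
  rw [le_div_iff₀ hk, ← Real.sqrt_sq hk.le, ← Real.sqrt_mul hE.le]
  exact Real.sqrt_le_sqrt (le_of_mul_le_mul_right (by nlinarith) hE)

theorem one_dimensional_reduced_a_priori_bound_general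
    (a b : ℝ) (γ ε c : ℝ) (hε : ε ∈ Set.Ioo (0 : ℝ) 1)
    (K H k₂ : ℝ → ℝ) (hKmeas : Measurable K) (hHmeas : Measurable H)
    (hk₂meas : Measurable k₂)
    (K₀ K₁ H₁ : ℝ) (hK₀ : 0 < K₀)
    (hKbd : ∀ x ∈ Set.Icc a b, K₀ ≤ K x ∧ K x ≤ K₁)
    (hHbd : ∀ x ∈ Set.Icc a b, 0 ≤ H x ∧ H x ≤ H₁)
    (θ : Set (ℝ × ℝ))
    (hθ : θ = {p : ℝ × ℝ | p.1 ∈ Set.Icc a b ∧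
      ε * (k₂ p.1 - ε ^ γ * H p.1) < p.2 ∧ p.2 < ε * k₂ p.1})
    (f : ℝ × ℝ → ℝ) (hf : MemLp f 2 (volume.restrict θ))
    (hfbd : (1 / ε ^ (γ + 1)) * ∫ p in θ, (f p) ^ 2 ≤ c)
    (fhat : ℝ → ℝ)
    (hfhat : ∀ x, fhat x = (1 / (ε * K x)) *
      ∫ y in (ε * (k₂ x - ε ^ γ * H x))..(ε * k₂ x), f (x, y))
    (w w' : ℝ → ℝ)
    (hderiv : ∀ x ∈ Set.Icc a b, HasDerivAt w (w' x) x)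
    (hw'cont : ContinuousOn w' (Set.Icc a b))
    (henergy : ∫ x in Set.Icc a b, K x * ((w' x) ^ 2 + (w x) ^ 2) =
      (1 / ε ^ γ) * ∫ x in Set.Icc a b, K x * fhat x * w x) :
    Real.sqrt (∫ x in Set.Icc a b, ((w' x) ^ 2 + (w x) ^ 2)) ≤
      Real.sqrt (c * H₁) / K₀ := by
  set I := Icc a b
  set E := ∫ x in I, (w' x ^ 2 + w x ^ 2)
  have hPε : ε ^ (γ + 1) = ε * ε ^ γ := by rw [Real.rpow_add hε.1, Real.rpow_one, mul_comm]
  set P := ε ^ (γ + 1)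
  have hP : 0 < P := Real.rpow_pos_of_pos hε.1 _
  set lower := fun x => ε * (k₂ x - ε ^ γ * H x)
  set upper := fun x => ε * k₂ x
  have hlower : Measurable lower := by fun_prop
  have hupper : Measurable upper := by fun_prop
  have hthick : ∀ x, upper x - lower x = P * H x := fun x => by
    simp only [lower, upper, hPε]; ring
  have hle : ∀ x ∈ I, lower x ≤ upper x := fun x hx =>
    sub_nonneg.1 (hthick x ▸ mul_nonneg hP.le (hHbd x hx).1)
  have hthin : ∀ x ∈ I, upper x - lower x ≤ P * H₁ := fun x hx =>
    hthick x ▸ mul_le_mul_of_nonneg_left (hHbd x hx).2 hP.le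
  have hθR : θ = regionBetween lower upper I := hθ
  subst hθR
  have hwcont : ContinuousOn w I := fun x hx => (hderiv x hx).continuousAt.continuousWithinAt
  have hv : IntegrableOn (fun x => w' x ^ 2 + w x ^ 2) I :=
    ((hw'cont.pow 2).add (hwcont.pow 2)).integrableOn_compact isCompact_Icc
  have hE : 0 ≤ E := setIntegral_nonneg measurableSet_Icc fun x _ => by positivity
  have hwθ : MemLp (fun p : ℝ × ℝ => w p.1) 2 (volume.restrict (regionBetween lower upper I)) :=
    memLp_comp_fst_regionBetween hlower hupper isCompact_Icc hthin hwcont 2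
  have hKv : K₀ * E ≤ ∫ x in I, K x * (w' x ^ 2 + w x ^ 2) :=
    mul_setIntegral_le_setIntegral_mul measurableSet_Icc hv hKmeas.aestronglyMeasurable hK₀.le
      hKbd fun x _ => by positivity
  have hrhs : P * ∫ x in I, K x * (w' x ^ 2 + w x ^ 2) =
      ∫ p in regionBetween lower upper I, w p.1 * f p := by
    rw [henergy, hPε, mul_assoc ε, ← mul_assoc (ε ^ γ), mul_one_div_cancel
      (Real.rpow_pos_of_pos hε.1 γ).ne', one_mul, ← integral_const_mul, Measure.volume_eq_prod,
      setIntegral_regionBetween_comp_fst_mul hlower hupper measurableSet_Icc hle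
        (hwθ.integrable_mul hf)]
    refine setIntegral_congr_fun measurableSet_Icc fun x hx => ?_
    have hKx : K x ≠ 0 := (hK₀.trans_le (hKbd x hx).1).ne'
    rw [hfhat]
    field_simp [hε.1.ne']
    exact mul_comm _ _
  have hstrip : ∫ p in regionBetween lower upper I, w p.1 ^ 2 ≤ P * H₁ * E :=
    setIntegral_regionBetween_comp_fst_le hlower hupper measurableSet_Icc hle hthin
      (φ := fun x => w x ^ 2) hwθ.integrable_sq (fun x _ => sq_nonneg (w x))
      (fun x _ => le_add_of_nonneg_left (sq_nonneg (w' x))) hv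
  have hfL2 : ∫ p in regionBetween lower upper I, f p ^ 2 ≤ c * P := by
    rwa [one_div, inv_mul_le_iff₀ hP, mul_comm] at hfbd
  refine sqrt_le_sqrt_div_of_sq_mul_sq_le hK₀ hE ?_
  have hT : P * (K₀ * E) ≤ ∫ p in regionBetween lower upper I, w p.1 * f p :=
    hrhs ▸ mul_le_mul_of_nonneg_left hKv hP.le
  have hP2 : P ^ 2 * (K₀ ^ 2 * E ^ 2) ≤ P ^ 2 * (c * H₁ * E) := calc
    P ^ 2 * (K₀ ^ 2 * E ^ 2) = (P * (K₀ * E)) ^ 2 := by ring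
    _ ≤ (∫ p in regionBetween lower upper I, w p.1 * f p) ^ 2 :=
        pow_le_pow_left₀ (by positivity) hT 2
    _ ≤ (∫ p in regionBetween lower upper I, w p.1 ^ 2) *
          ∫ p in regionBetween lower upper I, f p ^ 2 :=
        sq_integral_mul_le_integral_sq_mul_integral_sq hwθ hf
    _ ≤ (P * H₁ * E) * (c * P) := mul_le_mul hstrip hfL2 (integral_nonneg fun _ => sq_nonneg _)
        ((integral_nonneg fun _ => sq_nonneg _).trans hstrip)
    _ = P ^ 2 * (c * H₁ * E) := by ring
  exact le_of_mul_le_mul_left hP2 (by positivity)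

/-- Uniform a priori `H¹`-bound for the one-dimensional reduced problem with a
concentrated right-hand side. -/
theorem one_dimensional_reduced_a_priori_bound
    (a b : ℝ) (hab : a < b) (γ ε c : ℝ) (hγ : 0 < γ) (hε : ε ∈ Set.Ioo (0 : ℝ) 1)
    (hc : 0 < c)
    (K H k₂ : ℝ → ℝ) (hKmeas : Measurable K) (hHmeas : Measurable H)
    (hk₂meas : Measurable k₂)
    (K₀ K₁ H₁ : ℝ) (hK₀ : 0 < K₀)
    (hKbd : ∀ x ∈ Set.Icc a b, K₀ ≤ K x ∧ K x ≤ K₁)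
    (hHbd : ∀ x ∈ Set.Icc a b, 0 ≤ H x ∧ H x ≤ H₁)
    (θ : Set (ℝ × ℝ))
    (hθ : θ = {p : ℝ × ℝ | p.1 ∈ Set.Icc a b ∧
      ε * (k₂ p.1 - ε ^ γ * H p.1) < p.2 ∧ p.2 < ε * k₂ p.1})
    (f : ℝ × ℝ → ℝ) (hf : MemLp f 2 (volume.restrict θ))
    (hfbd : (1 / ε ^ (γ + 1)) * ∫ p in θ, (f p) ^ 2 ≤ c)
    (fhat : ℝ → ℝ)
    (hfhat : ∀ x, fhat x = (1 / (ε * K x)) *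
      ∫ y in (ε * (k₂ x - ε ^ γ * H x))..(ε * k₂ x), f (x, y))
    (w w' : ℝ → ℝ)
    (hderiv : ∀ x ∈ Set.Icc a b, HasDerivAt w (w' x) x)
    (hw'cont : ContinuousOn w' (Set.Icc a b))
    (henergy : ∫ x in Set.Icc a b, K x * ((w' x) ^ 2 + (w x) ^ 2) =
      (1 / ε ^ γ) * ∫ x in Set.Icc a b, K x * fhat x * w x) :
    Real.sqrt (∫ x in Set.Icc a b, ((w' x) ^ 2 + (w x) ^ 2)) ≤
      Real.sqrt (c * H₁) / K₀ :=
  one_dimensional_reduced_a_priori_bound_general a b γ ε c hε K H k₂ hKmeas hHmeas hk₂meas K₀ K₁ H₁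
    hK₀ hKbd hHbd θ hθ f hf hfbd fhat hfhat w w' hderiv hw'cont henergy
end

section
/- Let I = [a,b] ⊂ ℝ with a < b, let γ > 0, ε ∈ (0,1), c > 0, let K : I → ℝ be measurable with 0 < K_0 ≤ K(x) ≤ K_1, and let H : I → ℝ be measurable with 0 ≤ H(x) ≤ H_1 and ε^γ H_1 ≤ K_0. Define Q = I × (0,1) and θ₂^ε = {(x,y) ∈ ℝ² : x ∈ I, 1 − ε^γ H(x)/K(x) < y < 1}. Let f ∈ L²(Q) satisfy ∫_{θ₂^ε} f² dx dy ≤ c ε^γ, and suppose w is continuously differentiable on an open set containing the closure of Q and satisfies the energy identity ∫_Q [ K(x) (∂w/∂x)² + (1/(ε² K(x))) (∂w/∂y)² + K(x) w² ] dx dy = (1/ε^γ) ∫_{θ₂^ε} K(x) f w dx dy. Then there exists a constant C > 0 depending only on c, K_0, K_1 and H_1 (and not on ε, K, H, f or w) such that ∫_Q w² dx dy ≤ C, ∫_Q (∂w/∂x)² dx dy ≤ C, and (1/ε²) ∫_Q (∂w/∂y)² dx dy ≤ C. -/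
/-!
Let `E` be the energy, the left side of the energy identity. By Young's inequality its right side
`ε^{-γ} ∫_{θ₂} K f w` is at most `ε^{-γ} K₁ (t/2 ∫_{θ₂} f² + 1/(2t) ∫_{θ₂} w²)`, and the first
integral is at most `c ε^γ`. The strip `θ₂` has width at most `ε^γ H₁ / K₀` below the side
`y = 1`, and on every vertical segment `u(y)² ≤ ∫₀¹ (2u² + u'²)`; hence the second integral is at
most `ε^γ H₁ / K₀ ∫_Q (2w² + w_y²) ≤ ε^γ H₁ / K₀ (2/K₀ + K₁) E`, using `ε < 1`. The powers of `ε`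
cancel, and for `t` large the term in `E` is absorbed by the left side, so `E ≤ K₁ t c`. The three
bounds follow because the energy density dominates `K₀ w²`, `K₀ w_x²` and `ε⁻² w_y² / K₁`.
-/

open MeasureTheory Set

theorem sq_le_sq_add_integral_of_hasDerivAt {u u' : ℝ → ℝ} {α β s y : ℝ}
    (hu : ∀ t ∈ Icc α β, HasDerivAt u (u' t) t) (hu' : ContinuousOn u' (Icc α β))
    (hs : s ∈ Icc α β) (hy : y ∈ Icc α β) :
    u y ^ 2 ≤ u s ^ 2 + ∫ t in Icc α β, (u t ^ 2 + u' t ^ 2) := by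
  have hcu : ContinuousOn u (Icc α β) := HasDerivAt.continuousOn hu
  have hG : IntegrableOn (fun t => u t ^ 2 + u' t ^ 2) (Icc α β) :=
    ((hcu.pow 2).add (hu'.pow 2)).integrableOn_Icc
  have hsub : uIcc s y ⊆ Icc α β := uIcc_subset_Icc hs hy
  have hftc : ∫ t in s..y, 2 * u t * u' t = u y ^ 2 - u s ^ 2 := by
    refine intervalIntegral.integral_eq_sub_of_hasDerivAt (f := fun t => u t ^ 2)
      (fun t ht => ?_) (((continuousOn_const.mul hcu).mul hu').mono hsub).intervalIntegrable
    simpa [mul_comm, mul_left_comm] using (hu t (hsub ht)).fun_pow 2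
  have hbound : ∫ t in s..y, 2 * u t * u' t ≤ ∫ t in Icc α β, (u t ^ 2 + u' t ^ 2) :=
    calc ∫ t in s..y, 2 * u t * u' t
        ≤ ∫ t in uIoc s y, ‖2 * u t * u' t‖ :=
          (Real.le_norm_self _).trans intervalIntegral.norm_integral_le_integral_norm_uIoc
      _ ≤ ∫ t in uIoc s y, (u t ^ 2 + u' t ^ 2) := by
          refine integral_mono_of_nonneg (ae_of_all _ fun t => norm_nonneg _)
            (hG.mono_set (uIoc_subset_uIcc.trans hsub)) (ae_of_all _ fun t => ?_)
          dsimp only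
          rw [Real.norm_eq_abs, abs_le]
          constructor <;> nlinarith [sq_nonneg (u t - u' t), sq_nonneg (u t + u' t)]
      _ ≤ ∫ t in Icc α β, (u t ^ 2 + u' t ^ 2) :=
          setIntegral_mono_set hG (ae_of_all _ fun t => by positivity)
            (uIoc_subset_uIcc.trans hsub).eventuallyLE
  linarith

theorem sq_le_integral_of_hasDerivAt {u u' : ℝ → ℝ}
    (hu : ∀ t ∈ Icc (0:ℝ) 1, HasDerivAt u (u' t) t) (hu' : ContinuousOn u' (Icc 0 1))
    {y : ℝ} (hy : y ∈ Icc (0:ℝ) 1) :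
    u y ^ 2 ≤ ∫ t in Ioo (0:ℝ) 1, (2 * u t ^ 2 + u' t ^ 2) := by
  have hu2 : IntegrableOn (fun t => u t ^ 2) (Icc 0 1) :=
    ((HasDerivAt.continuousOn hu).pow 2).integrableOn_Icc
  have hG : IntegrableOn (fun t => u t ^ 2 + u' t ^ 2) (Icc 0 1) :=
    hu2.add (hu'.pow 2).integrableOn_Icc
  set B := ∫ t in Icc (0:ℝ) 1, (u t ^ 2 + u' t ^ 2)
  have hIoo : Ioo (0:ℝ) 1 ⊆ Icc 0 1 := Ioo_subset_Icc_self
  have hconst : ∀ r : ℝ, IntegrableOn (fun _ => r) (Ioo (0:ℝ) 1) := fun r =>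
    integrableOn_const (by simp)
  -- average the pointwise bound over `s ∈ (0, 1)`, an interval of length one
  calc u y ^ 2 = ∫ _ in Ioo (0:ℝ) 1, u y ^ 2 := by simp
    _ ≤ ∫ s in Ioo (0:ℝ) 1, (u s ^ 2 + B) :=
      setIntegral_mono_on (hconst _) ((hu2.mono_set hIoo).add (hconst _)) measurableSet_Ioo
        fun s hs => sq_le_sq_add_integral_of_hasDerivAt hu hu' (hIoo hs) hy
    _ = ∫ t in Icc (0:ℝ) 1, (u t ^ 2 + (u t ^ 2 + u' t ^ 2)) := by
      rw [integral_add (hu2.mono_set hIoo) (hconst _), integral_add hu2 hG,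
        integral_Icc_eq_integral_Ioo]
      simp [B]
    _ = ∫ t in Ioo (0:ℝ) 1, (2 * u t ^ 2 + u' t ^ 2) := by
      rw [integral_Icc_eq_integral_Ioo]
      congr 1 with t
      ring

theorem integral_Ioo_one_sub_sq_le {u u' : ℝ → ℝ}
    (hu : ∀ t ∈ Icc (0:ℝ) 1, HasDerivAt u (u' t) t) (hu' : ContinuousOn u' (Icc 0 1))
    {δ : ℝ} (hδ₀ : 0 ≤ δ) (hδ₁ : δ ≤ 1) :
    ∫ y in Ioo (1 - δ) 1, u y ^ 2 ≤ δ * ∫ t in Ioo (0:ℝ) 1, (2 * u t ^ 2 + u' t ^ 2) := by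
  have hsub : Ioo (1 - δ) 1 ⊆ Icc (0:ℝ) 1 := fun y hy => ⟨by linarith [hy.1], hy.2.le⟩
  calc ∫ y in Ioo (1 - δ) 1, u y ^ 2
      ≤ (∫ t in Ioo (0:ℝ) 1, (2 * u t ^ 2 + u' t ^ 2)) * volume.real (Ioo (1 - δ) 1) :=
        (Real.le_norm_self _).trans <| norm_setIntegral_le_of_norm_le_const (by simp) fun y hy => by
          simpa using sq_le_integral_of_hasDerivAt hu hu' (hsub hy)
    _ = δ * ∫ t in Ioo (0:ℝ) 1, (2 * u t ^ 2 + u' t ^ 2) := by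
      rw [Real.volume_real_Ioo_of_le (by linarith)]; ring

theorem ContDiffOn.continuousOn_fderiv_apply {E F : Type*} [NormedAddCommGroup E]
    [NormedSpace ℝ E] [NormedAddCommGroup F] [NormedSpace ℝ F] {f : E → F} {U : Set E}
    (hf : ContDiffOn ℝ 1 f U) (hU : IsOpen U) (v : E) :
    ContinuousOn (fun p => fderiv ℝ f p v) U :=
  (ContinuousLinearMap.apply ℝ F v).continuous.comp_continuousOn
    (hf.continuousOn_fderiv_of_isOpen hU le_rfl)

theorem ContinuousOn.integrableOn_Icc_prod_Ioo {E : Type*} [NormedAddCommGroup E] {a b : ℝ}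
    {g : ℝ × ℝ → E} {U : Set (ℝ × ℝ)} (hg : ContinuousOn g U) (hRU : Icc a b ×ˢ Icc 0 1 ⊆ U) :
    IntegrableOn g (Icc a b ×ˢ Ioo 0 1) :=
  ((hg.mono hRU).integrableOn_compact (isCompact_Icc.prod isCompact_Icc)).mono_set
    (prod_mono subset_rfl Ioo_subset_Icc_self)

theorem abs_mul_mul_le {k f w K₁ t : ℝ} (hk₀ : 0 ≤ k) (hk : k ≤ K₁) (ht : 0 < t) :
    |k * f * w| ≤ K₁ * (t / 2 * f ^ 2 + 1 / (2 * t) * w ^ 2) := by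
  have young : |f| * |w| ≤ t / 2 * f ^ 2 + 1 / (2 * t) * w ^ 2 := by
    rw [← sq_abs f, ← sq_abs w]
    have := sq_nonneg (t * |f| - |w|)
    field_simp
    nlinarith
  rw [abs_mul, abs_mul, abs_of_nonneg hk₀, mul_assoc]
  exact mul_le_mul hk young (by positivity) (hk₀.trans hk)

theorem integral_mul_mul_le {α : Type*} [MeasurableSpace α] {μ : Measure α} {k f w : α → ℝ}
    {K₁ t : ℝ} (ht : 0 < t) (hk : ∀ᵐ p ∂μ, 0 ≤ k p ∧ k p ≤ K₁)
    (hf : Integrable (fun p => f p ^ 2) μ) (hw : Integrable (fun p => w p ^ 2) μ) :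
    ∫ p, k p * f p * w p ∂μ ≤
      K₁ * (t / 2 * ∫ p, f p ^ 2 ∂μ + 1 / (2 * t) * ∫ p, w p ^ 2 ∂μ) := by
  have hf' := hf.const_mul (t / 2)
  have hw' := hw.const_mul (1 / (2 * t))
  calc ∫ p, k p * f p * w p ∂μ
      ≤ ∫ p, K₁ * (t / 2 * f p ^ 2 + 1 / (2 * t) * w p ^ 2) ∂μ :=
        (Real.le_norm_self _).trans <| norm_integral_le_of_norm_le
          ((hf'.add hw').const_mul K₁) (hk.mono fun p hp => abs_mul_mul_le hp.1 hp.2 ht)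
    _ = _ := by
        rw [integral_const_mul, integral_add hf' hw', integral_const_mul, integral_const_mul]

/-- `θ₂^ε` is `topStrip a b (fun x => ε ^ γ * H x / K x)`. -/
def topStrip (a b : ℝ) (h : ℝ → ℝ) : Set (ℝ × ℝ) :=
  {p | p.1 ∈ Icc a b ∧ 1 - h p.1 < p.2 ∧ p.2 < 1}

theorem DifferentiableAt.hasDerivAt_comp_mk_fderiv_zero_one {E : Type*} [NormedAddCommGroup E]
    [NormedSpace ℝ E] {w : ℝ × ℝ → E} {x t : ℝ} (hw : DifferentiableAt ℝ w (x, t)) :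
    HasDerivAt (fun s => w (x, s)) (fderiv ℝ w (x, t) (0, 1)) t :=
  hw.hasFDerivAt.comp_hasDerivAt t ((hasDerivAt_const t x).prodMk (hasDerivAt_id t))

section topStrip

variable {a b : ℝ} {h : ℝ → ℝ}

theorem measurableSet_topStrip (hh : Measurable h) : MeasurableSet (topStrip a b h) :=
  (measurable_fst measurableSet_Icc).inter <|
    (measurableSet_lt (measurable_const.sub (hh.comp measurable_fst)) measurable_snd).inter
      (measurableSet_lt measurable_snd measurable_const)

theorem topStrip_subset (hh : ∀ x ∈ Icc a b, h x ≤ 1) :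
    topStrip a b h ⊆ Icc a b ×ˢ Ioo 0 1 :=
  fun p ⟨hx, h₁, h₂⟩ => ⟨hx, by linarith [hh p.1 hx], h₂⟩

theorem integral_Ioo_indicator_topStrip {g : ℝ × ℝ → ℝ} {x : ℝ} (hx : x ∈ Icc a b)
    (hh : h x ≤ 1) :
    ∫ y in Ioo (0:ℝ) 1, (topStrip a b h).indicator g (x, y) = ∫ y in Ioo (1 - h x) 1, g (x, y) := by
  have hslice : Prod.mk x ⁻¹' topStrip a b h = Ioo (1 - h x) 1 := by
    ext y
    simp [topStrip, hx.1, hx.2]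
  simp_rw [← indicator_comp_right (Prod.mk x) (g := g), hslice]
  rw [setIntegral_indicator measurableSet_Ioo,
    inter_eq_self_of_subset_right (Ioo_subset_Ioo_left (by linarith))]
  rfl

theorem integral_Ioo_indicator_topStrip_sq_le {δ x : ℝ} {w : ℝ × ℝ → ℝ} {U : Set (ℝ × ℝ)}
    (hU : IsOpen U) (hRU : Icc a b ×ˢ Icc 0 1 ⊆ U) (hw : ContDiffOn ℝ 1 w U)
    (hhδ : 0 ≤ h x ∧ h x ≤ δ) (hδ : δ ≤ 1) (hx : x ∈ Icc a b) :
    ∫ y in Ioo (0:ℝ) 1, (topStrip a b h).indicator (fun p => w p ^ 2) (x, y) ≤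
      δ * ∫ y in Ioo (0:ℝ) 1, (2 * w (x, y) ^ 2 + fderiv ℝ w (x, y) (0, 1) ^ 2) := by
  have hxU : ∀ t ∈ Icc (0:ℝ) 1, (x, t) ∈ U := fun t ht => hRU ⟨hx, ht⟩
  have hderiv : ∀ t ∈ Icc (0:ℝ) 1, HasDerivAt (fun s => w (x, s)) (fderiv ℝ w (x, t) (0, 1)) t :=
    fun t ht => ((hw.differentiableOn one_ne_zero).differentiableAt
      (hU.mem_nhds (hxU t ht))).hasDerivAt_comp_mk_fderiv_zero_one
  rw [integral_Ioo_indicator_topStrip hx (hhδ.2.trans hδ)]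
  calc _ ≤ h x * ∫ y in Ioo (0:ℝ) 1, (2 * w (x, y) ^ 2 + fderiv ℝ w (x, y) (0, 1) ^ 2) :=
        integral_Ioo_one_sub_sq_le hderiv
          ((hw.continuousOn_fderiv_apply hU (0, 1)).comp (by fun_prop) hxU) hhδ.1 (hhδ.2.trans hδ)
    _ ≤ _ := mul_le_mul_of_nonneg_right hhδ.2
        (setIntegral_nonneg measurableSet_Ioo fun _ _ => by positivity)

theorem integral_topStrip_sq_le {δ : ℝ} {w : ℝ × ℝ → ℝ} {U : Set (ℝ × ℝ)}
    (hU : IsOpen U) (hRU : Icc a b ×ˢ Icc 0 1 ⊆ U) (hw : ContDiffOn ℝ 1 w U)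
    (hh : Measurable h) (hhδ : ∀ x ∈ Icc a b, 0 ≤ h x ∧ h x ≤ δ) (hδ : δ ≤ 1) :
    ∫ p in topStrip a b h, w p ^ 2 ≤
      δ * ∫ p in Icc a b ×ˢ Ioo 0 1, (2 * w p ^ 2 + fderiv ℝ w p (0, 1) ^ 2) := by
  have hwc := hw.continuousOn
  have hwy := hw.continuousOn_fderiv_apply hU (0, 1)
  have hw2 : IntegrableOn (fun p => w p ^ 2) (Icc a b ×ˢ Ioo 0 1) :=
    (hwc.pow 2).integrableOn_Icc_prod_Ioo hRU
  have hG : IntegrableOn (fun p => 2 * w p ^ 2 + fderiv ℝ w p (0, 1) ^ 2) (Icc a b ×ˢ Ioo 0 1) :=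
    (by fun_prop : ContinuousOn (fun p => 2 * w p ^ 2 + fderiv ℝ w p (0, 1) ^ 2) U)
      |>.integrableOn_Icc_prod_Ioo hRU
  have hG' : Integrable
      (fun x => ∫ y in Ioo (0:ℝ) 1, (2 * w (x, y) ^ 2 + fderiv ℝ w (x, y) (0, 1) ^ 2))
      (volume.restrict (Icc a b)) := by
    rw [IntegrableOn, Measure.volume_eq_prod, ← Measure.prod_restrict] at hG
    exact hG.integral_prod_left
  have hθQ := topStrip_subset fun x hx => (hhδ x hx).2.trans hδ
  calc ∫ p in topStrip a b h, w p ^ 2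
      = ∫ p in Icc a b ×ˢ Ioo 0 1, (topStrip a b h).indicator (fun p => w p ^ 2) p := by
        rw [setIntegral_indicator (measurableSet_topStrip hh), inter_eq_self_of_subset_right hθQ]
    _ = ∫ x in Icc a b, ∫ y in Ioo (0:ℝ) 1,
          (topStrip a b h).indicator (fun p => w p ^ 2) (x, y) :=
        setIntegral_prod _ (hw2.indicator (measurableSet_topStrip hh))
    _ ≤ ∫ x in Icc a b, δ *
          ∫ y in Ioo (0:ℝ) 1, (2 * w (x, y) ^ 2 + fderiv ℝ w (x, y) (0, 1) ^ 2) :=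
        integral_mono_of_nonneg
          (ae_of_all _ fun _ => integral_nonneg fun _ =>
            indicator_nonneg (fun _ _ => sq_nonneg _) _)
          (hG'.const_mul δ) (ae_restrict_of_forall_mem measurableSet_Icc fun x hx =>
            integral_Ioo_indicator_topStrip_sq_le hU hRU hw (hhδ x hx) hδ hx)
    _ = δ * ∫ p in Icc a b ×ˢ Ioo 0 1, (2 * w p ^ 2 + fderiv ℝ w p (0, 1) ^ 2) := by
        rw [integral_const_mul]
        exact congrArg (δ * ·) (setIntegral_prod _ hG).symm

end topStrip

noncomputable def energyDensity (ε : ℝ) (K : ℝ → ℝ) (w : ℝ × ℝ → ℝ) (p : ℝ × ℝ) : ℝ :=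
  K p.1 * fderiv ℝ w p (1, 0) ^ 2 + 1 / (ε ^ 2 * K p.1) * fderiv ℝ w p (0, 1) ^ 2 +
    K p.1 * w p ^ 2

section energyDensity

variable {ε K₀ K₁ : ℝ} {K : ℝ → ℝ} {w : ℝ × ℝ → ℝ}

section pointwise

variable {p : ℝ × ℝ}

theorem energyDensity_nonneg (hK : 0 ≤ K p.1) : 0 ≤ energyDensity ε K w p := by
  have := one_div_nonneg.2 (mul_nonneg (sq_nonneg ε) hK)
  unfold energyDensity
  positivity

theorem mul_sq_le_energyDensity (hK₀ : 0 ≤ K₀) (hK : K₀ ≤ K p.1) :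
    K₀ * w p ^ 2 ≤ energyDensity ε K w p := by
  have := one_div_nonneg.2 (mul_nonneg (sq_nonneg ε) (hK₀.trans hK))
  unfold energyDensity
  nlinarith [sq_nonneg (w p), sq_nonneg (fderiv ℝ w p (1, 0)), sq_nonneg (fderiv ℝ w p (0, 1))]

theorem mul_fderiv_one_zero_sq_le_energyDensity (hK₀ : 0 ≤ K₀) (hK : K₀ ≤ K p.1) :
    K₀ * fderiv ℝ w p (1, 0) ^ 2 ≤ energyDensity ε K w p := by
  have := one_div_nonneg.2 (mul_nonneg (sq_nonneg ε) (hK₀.trans hK))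
  unfold energyDensity
  nlinarith [sq_nonneg (w p), sq_nonneg (fderiv ℝ w p (1, 0)), sq_nonneg (fderiv ℝ w p (0, 1))]

theorem one_div_sq_mul_fderiv_zero_one_sq_le_energyDensity (hK₀ : 0 < K p.1) (hK₁ : K p.1 ≤ K₁) :
    1 / ε ^ 2 * fderiv ℝ w p (0, 1) ^ 2 ≤ K₁ * energyDensity ε K w p := by
  have he := energyDensity_nonneg (ε := ε) (w := w) hK₀.le
  calc 1 / ε ^ 2 * fderiv ℝ w p (0, 1) ^ 2
      = K p.1 * (1 / (ε ^ 2 * K p.1) * fderiv ℝ w p (0, 1) ^ 2) := by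
        rw [← mul_assoc, mul_one_div, div_mul_cancel_right₀ hK₀.ne', one_div]
    _ ≤ K p.1 * energyDensity ε K w p := by
        gcongr
        unfold energyDensity
        nlinarith [sq_nonneg (w p), sq_nonneg (fderiv ℝ w p (1, 0))]
    _ ≤ K₁ * energyDensity ε K w p := by gcongr

theorem two_mul_sq_add_fderiv_zero_one_sq_le_energyDensity (hε₀ : 0 < ε) (hε₁ : ε ≤ 1)
    (hK₀ : 0 < K₀) (hK : K₀ ≤ K p.1 ∧ K p.1 ≤ K₁) :
    2 * w p ^ 2 + fderiv ℝ w p (0, 1) ^ 2 ≤ (2 / K₀ + K₁) * energyDensity ε K w p := by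
  have h₀ := mul_sq_le_energyDensity (ε := ε) (w := w) hK₀.le hK.1
  have h₁ := one_div_sq_mul_fderiv_zero_one_sq_le_energyDensity (ε := ε) (w := w)
    (hK₀.trans_le hK.1) hK.2
  have hε : fderiv ℝ w p (0, 1) ^ 2 ≤ 1 / ε ^ 2 * fderiv ℝ w p (0, 1) ^ 2 :=
    le_mul_of_one_le_left (sq_nonneg _) (one_le_one_div (by positivity) (pow_le_one₀ hε₀.le hε₁))
  have h₂ : 2 * w p ^ 2 ≤ 2 / K₀ * energyDensity ε K w p := by
    rw [div_mul_eq_mul_div, le_div_iff₀ hK₀]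
    linarith
  linarith

theorem energyDensity_le (hK₀ : 0 < K₀) (hK : K₀ ≤ K p.1 ∧ K p.1 ≤ K₁) :
    energyDensity ε K w p ≤ K₁ * fderiv ℝ w p (1, 0) ^ 2 +
      1 / (ε ^ 2 * K₀) * fderiv ℝ w p (0, 1) ^ 2 + K₁ * w p ^ 2 := by
  have hKp := hK₀.trans_le hK.1
  have hinv : 1 / (ε ^ 2 * K p.1) ≤ 1 / (ε ^ 2 * K₀) := by
    rw [← one_div_mul_one_div, ← one_div_mul_one_div]
    gcongr
    exact hK.1
  unfold energyDensity
  gcongr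
  · exact hK.2
  · exact hK.2

end pointwise

theorem aestronglyMeasurable_energyDensity {μ : Measure (ℝ × ℝ)} (hKm : Measurable K)
    (hw : AEStronglyMeasurable w μ) : AEStronglyMeasurable (energyDensity ε K w) μ := by
  have hK : Measurable fun p : ℝ × ℝ => K p.1 := hKm.comp measurable_fst
  have hx := (measurable_fderiv_apply_const ℝ w ((1:ℝ), (0:ℝ))).pow_const 2
  have hy := (measurable_fderiv_apply_const ℝ w ((0:ℝ), (1:ℝ))).pow_const 2
  exact ((hK.mul hx).add ((measurable_const.div (measurable_const.mul hK)).mul hy)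
    ).aestronglyMeasurable.add (hK.aestronglyMeasurable.mul (hw.pow 2))

theorem integrableOn_energyDensity {a b : ℝ} {U : Set (ℝ × ℝ)} (hU : IsOpen U)
    (hRU : Icc a b ×ˢ Icc 0 1 ⊆ U) (hw : ContDiffOn ℝ 1 w U) (hKm : Measurable K)
    (hK₀ : 0 < K₀) (hK : ∀ x ∈ Icc a b, K₀ ≤ K x ∧ K x ≤ K₁) :
    IntegrableOn (energyDensity ε K w) (Icc a b ×ˢ Ioo 0 1) := by
  have hQ : MeasurableSet (Icc a b ×ˢ Ioo (0:ℝ) 1) := measurableSet_Icc.prod measurableSet_Ioo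
  have hwc := hw.continuousOn
  have hwx := hw.continuousOn_fderiv_apply hU (1, 0)
  have hwy := hw.continuousOn_fderiv_apply hU (0, 1)
  have hg : ContinuousOn (fun p => K₁ * fderiv ℝ w p (1, 0) ^ 2 +
      1 / (ε ^ 2 * K₀) * fderiv ℝ w p (0, 1) ^ 2 + K₁ * w p ^ 2) U := by fun_prop
  refine (hg.integrableOn_Icc_prod_Ioo hRU).mono'
    (aestronglyMeasurable_energyDensity hKm ((hwc.mono ?_).aestronglyMeasurable hQ))
    (ae_restrict_of_forall_mem hQ fun p hp => ?_)
  · exact (prod_mono subset_rfl Ioo_subset_Icc_self).trans hRU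
  · rw [Real.norm_of_nonneg (energyDensity_nonneg (hK₀.trans_le (hK p.1 hp.1).1).le)]
    exact energyDensity_le hK₀ (hK p.1 hp.1)

variable {μ : Measure (ℝ × ℝ)}

theorem mul_integral_sq_le_integral_energyDensity (hK₀ : 0 ≤ K₀) (hK : ∀ᵐ p ∂μ, K₀ ≤ K p.1)
    (he : Integrable (energyDensity ε K w) μ) :
    K₀ * ∫ p, w p ^ 2 ∂μ ≤ ∫ p, energyDensity ε K w p ∂μ := by
  rw [← integral_const_mul]
  exact integral_mono_of_nonneg (ae_of_all _ fun p => by positivity) he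
    (hK.mono fun p hp => mul_sq_le_energyDensity hK₀ hp)

theorem mul_integral_fderiv_one_zero_sq_le_integral_energyDensity (hK₀ : 0 ≤ K₀)
    (hK : ∀ᵐ p ∂μ, K₀ ≤ K p.1) (he : Integrable (energyDensity ε K w) μ) :
    K₀ * ∫ p, fderiv ℝ w p (1, 0) ^ 2 ∂μ ≤ ∫ p, energyDensity ε K w p ∂μ := by
  rw [← integral_const_mul]
  exact integral_mono_of_nonneg (ae_of_all _ fun p => by positivity) he
    (hK.mono fun p hp => mul_fderiv_one_zero_sq_le_energyDensity hK₀ hp)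

theorem one_div_sq_mul_integral_fderiv_zero_one_sq_le_integral_energyDensity
    (hK : ∀ᵐ p ∂μ, 0 < K p.1 ∧ K p.1 ≤ K₁) (he : Integrable (energyDensity ε K w) μ) :
    1 / ε ^ 2 * ∫ p, fderiv ℝ w p (0, 1) ^ 2 ∂μ ≤ K₁ * ∫ p, energyDensity ε K w p ∂μ := by
  rw [← integral_const_mul, ← integral_const_mul]
  exact integral_mono_of_nonneg (ae_of_all _ fun p => by positivity) (he.const_mul K₁)
    (hK.mono fun p hp => one_div_sq_mul_fderiv_zero_one_sq_le_energyDensity hp.1 hp.2)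

theorem integral_two_mul_sq_add_fderiv_zero_one_sq_le_integral_energyDensity (hε₀ : 0 < ε)
    (hε₁ : ε ≤ 1) (hK₀ : 0 < K₀) (hK : ∀ᵐ p ∂μ, K₀ ≤ K p.1 ∧ K p.1 ≤ K₁)
    (he : Integrable (energyDensity ε K w) μ) :
    ∫ p, (2 * w p ^ 2 + fderiv ℝ w p (0, 1) ^ 2) ∂μ ≤
      (2 / K₀ + K₁) * ∫ p, energyDensity ε K w p ∂μ := by
  rw [← integral_const_mul]
  exact integral_mono_of_nonneg (ae_of_all _ fun p => by positivity) (he.const_mul _)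
    (hK.mono fun p hp => two_mul_sq_add_fderiv_zero_one_sq_le_energyDensity hε₀ hε₁ hK₀ hp)

end energyDensity

theorem integral_energyDensity_le {a b ε γ c K₀ K₁ H₁ : ℝ} {K H : ℝ → ℝ}
    {f w : ℝ × ℝ → ℝ} {U : Set (ℝ × ℝ)} (hK₀ : 0 < K₀) (hK₀₁ : K₀ ≤ K₁) (hH₁ : 0 ≤ H₁)
    (hε₀ : 0 < ε) (hε₁ : ε ≤ 1) (hKm : Measurable K) (hHm : Measurable H)
    (hK : ∀ x ∈ Icc a b, K₀ ≤ K x ∧ K x ≤ K₁) (hH : ∀ x ∈ Icc a b, 0 ≤ H x ∧ H x ≤ H₁)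
    (hεH : ε ^ γ * H₁ ≤ K₀) (hf : MemLp f 2 (volume.restrict (Icc a b ×ˢ Ioo 0 1)))
    (hfθ : ∫ p in topStrip a b (fun x => ε ^ γ * H x / K x), f p ^ 2 ≤ c * ε ^ γ)
    (hU : IsOpen U) (hRU : Icc a b ×ˢ Icc 0 1 ⊆ U) (hw : ContDiffOn ℝ 1 w U)
    (hEI : ∫ p in Icc a b ×ˢ Ioo 0 1, energyDensity ε K w p =
      1 / ε ^ γ * ∫ p in topStrip a b (fun x => ε ^ γ * H x / K x), K p.1 * f p * w p) :
    ∫ p in Icc a b ×ˢ Ioo 0 1, energyDensity ε K w p ≤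
      K₁ * (1 + K₁ * (H₁ / K₀) * (2 / K₀ + K₁)) * c := by
  set E := ∫ p in Icc a b ×ˢ Ioo 0 1, energyDensity ε K w p
  set D := K₁ * (H₁ / K₀) * (2 / K₀ + K₁)
  set t := 1 + D
  have hεγ : 0 < ε ^ γ := Real.rpow_pos_of_pos hε₀ γ
  have hK₁ : 0 < K₁ := hK₀.trans_le hK₀₁
  have ht : 0 < t := by positivity
  have hQ : MeasurableSet (Icc a b ×ˢ Ioo (0:ℝ) 1) := measurableSet_Icc.prod measurableSet_Ioo
  have hKQ : ∀ᵐ p ∂(volume.restrict (Icc a b ×ˢ Ioo (0:ℝ) 1)), K₀ ≤ K p.1 ∧ K p.1 ≤ K₁ :=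
    ae_restrict_of_forall_mem hQ fun p hp => hK p.1 hp.1
  have hE₀ : 0 ≤ E := setIntegral_nonneg hQ fun p hp =>
    energyDensity_nonneg (hK₀.trans_le (hK p.1 hp.1).1).le
  have hh : ∀ x ∈ Icc a b, 0 ≤ ε ^ γ * H x / K x ∧ ε ^ γ * H x / K x ≤ ε ^ γ * H₁ / K₀ :=
    fun x hx => ⟨div_nonneg (mul_nonneg hεγ.le (hH x hx).1) (hK₀.le.trans (hK x hx).1),
      div_le_div₀ (by positivity) (mul_le_mul_of_nonneg_left (hH x hx).2 hεγ.le) hK₀ (hK x hx).1⟩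
  have hδ : ε ^ γ * H₁ / K₀ ≤ 1 := (div_le_one hK₀).2 hεH
  have hθQ : topStrip a b (fun x => ε ^ γ * H x / K x) ⊆ Icc a b ×ˢ Ioo 0 1 :=
    topStrip_subset fun x hx => (hh x hx).2.trans hδ
  have hhm : Measurable fun x => ε ^ γ * H x / K x := by fun_prop
  have hT := integral_topStrip_sq_le hU hRU hw hhm hh hδ
  have hG := integral_two_mul_sq_add_fderiv_zero_one_sq_le_integral_energyDensity hε₀ hε₁ hK₀ hKQ
    (integrableOn_energyDensity hU hRU hw hKm hK₀ hK)
  have hP :=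
    integral_mul_mul_le (k := fun p => K p.1) ht
      (ae_restrict_of_forall_mem (measurableSet_topStrip hhm) fun p hp =>
        ⟨hK₀.le.trans (hK p.1 hp.1).1, (hK p.1 hp.1).2⟩)
      (IntegrableOn.mono_set hf.integrable_sq hθQ)
      (((hw.continuousOn.pow 2).integrableOn_Icc_prod_Ioo hRU).mono_set hθQ)
  have hE : E ≤ K₁ * t * c / 2 + D / (2 * t) * E :=
    calc E = 1 / ε ^ γ * ∫ p in topStrip a b (fun x => ε ^ γ * H x / K x), K p.1 * f p * w p := hEI
      _ ≤ 1 / ε ^ γ * (K₁ * (t / 2 * (c * ε ^ γ) +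
          1 / (2 * t) * (ε ^ γ * H₁ / K₀ * ((2 / K₀ + K₁) * E)))) := by
        gcongr
        refine hP.trans ?_
        gcongr
        exact hT.trans (by gcongr)
      _ = K₁ * t * c / 2 + D / (2 * t) * E := by simp only [D]; field_simp
  have hDt : D / (2 * t) ≤ 1 / 2 := by
    rw [div_le_iff₀ (by positivity)]
    simp only [t]
    linarith
  nlinarith

theorem rectangle_anisotropic_a_priori_bounds_general
    (a b : ℝ) (γ : ℝ) (c : ℝ) (hc : 0 < c)
    (K₀ K₁ H₁ : ℝ) (hK₀ : 0 < K₀) (hK₀₁ : K₀ ≤ K₁) (hH₁ : 0 ≤ H₁)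
    (Q : Set (ℝ × ℝ)) (hQ : Q = (Set.Icc a b) ×ˢ (Set.Ioo (0 : ℝ) 1)) :
    ∃ C : ℝ, 0 < C ∧
      ∀ ε ∈ Set.Ioo (0 : ℝ) 1, ∀ K H : ℝ → ℝ,
        Measurable K → Measurable H →
        (∀ x ∈ Set.Icc a b, K₀ ≤ K x ∧ K x ≤ K₁) →
        (∀ x ∈ Set.Icc a b, 0 ≤ H x ∧ H x ≤ H₁) →
        ε ^ γ * H₁ ≤ K₀ →
        ∀ θ₂ : Set (ℝ × ℝ),
          θ₂ = {p : ℝ × ℝ | p.1 ∈ Set.Icc a b ∧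
            1 - ε ^ γ * H p.1 / K p.1 < p.2 ∧ p.2 < 1} →
        ∀ f : ℝ × ℝ → ℝ, MemLp f 2 (volume.restrict Q) →
          (∫ p in θ₂, (f p) ^ 2) ≤ c * ε ^ γ →
        ∀ (w : ℝ × ℝ → ℝ) (U : Set (ℝ × ℝ)), IsOpen U → closure Q ⊆ U →
          ContDiffOn ℝ 1 w U →
          (∫ p in Q,
              (K p.1 * (fderiv ℝ w p (1, 0)) ^ 2 +
                (1 / (ε ^ 2 * K p.1)) * (fderiv ℝ w p (0, 1)) ^ 2 +
                K p.1 * (w p) ^ 2) =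
            (1 / ε ^ γ) * ∫ p in θ₂, K p.1 * f p * w p) →
          (∫ p in Q, (w p) ^ 2) ≤ C ∧
          (∫ p in Q, (fderiv ℝ w p (1, 0)) ^ 2) ≤ C ∧
          (1 / ε ^ 2) * (∫ p in Q, (fderiv ℝ w p (0, 1)) ^ 2) ≤ C := by
  have hK₁ : 0 < K₁ := hK₀.trans_le hK₀₁
  set M := K₁ * (1 + K₁ * (H₁ / K₀) * (2 / K₀ + K₁)) * c
  have hM : 0 < M := by positivity
  have hMK₀ : M / K₀ ≤ (1 / K₀ + K₁) * M := by
    rw [add_mul, one_div_mul_eq_div]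
    exact le_add_of_nonneg_right (by positivity)
  refine ⟨(1 / K₀ + K₁) * M, by positivity, ?_⟩
  rintro ε ⟨hε₀, hε₁⟩ K H hKm hHm hK hH hεH θ₂ rfl f hf hfθ w U hU hQU hw hEI
  subst hQ
  have hRU : Icc a b ×ˢ Icc 0 1 ⊆ U := by
    rwa [closure_prod_eq, closure_Icc, closure_Ioo zero_ne_one] at hQU
  have hE := integral_energyDensity_le hK₀ hK₀₁ hH₁ hε₀ hε₁.le hKm hHm hK hH hεH hf hfθ hU hRU hw
    hEI
  have he := integrableOn_energyDensity (ε := ε) hU hRU hw hKm hK₀ hK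
  have hKQ : ∀ᵐ p ∂(volume.restrict (Icc a b ×ˢ Ioo (0:ℝ) 1)), K₀ ≤ K p.1 ∧ K p.1 ≤ K₁ :=
    ae_restrict_of_forall_mem (measurableSet_Icc.prod measurableSet_Ioo) fun p hp => hK p.1 hp.1
  refine ⟨?_, ?_, ?_⟩
  · refine ((le_div_iff₀' hK₀).2 ?_).trans hMK₀
    exact (mul_integral_sq_le_integral_energyDensity hK₀.le (hKQ.mono fun _ hp => hp.1) he).trans hE
  · refine ((le_div_iff₀' hK₀).2 ?_).trans hMK₀
    exact (mul_integral_fderiv_one_zero_sq_le_integral_energyDensity hK₀.le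
      (hKQ.mono fun _ hp => hp.1) he).trans hE
  · calc _ ≤ K₁ * ∫ p in Icc a b ×ˢ Ioo 0 1, energyDensity ε K w p :=
          one_div_sq_mul_integral_fderiv_zero_one_sq_le_integral_energyDensity
            (hKQ.mono fun _ hp => ⟨hK₀.trans_le hp.1, hp.2⟩) he
      _ ≤ K₁ * M := by gcongr
      _ ≤ (1 / K₀ + K₁) * M := by gcongr; exact le_add_of_nonneg_left (by positivity)

/-- Uniform a priori estimates for the anisotropic rescaled problem on the fixed rectangle:
the `L²` norms of `w`, of `∂w/∂x`, and the rescaled `L²` norm of `∂w/∂y` are bounded by a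
constant depending only on `c`, `K₀`, `K₁`, `H₁` (and not on `ε`, `K`, `H`, `f`, `w`). -/
theorem rectangle_anisotropic_a_priori_bounds
    (a b : ℝ) (hab : a < b) (γ : ℝ) (hγ : 0 < γ) (c : ℝ) (hc : 0 < c)
    (K₀ K₁ H₁ : ℝ) (hK₀ : 0 < K₀) (hK₀₁ : K₀ ≤ K₁) (hH₁ : 0 ≤ H₁)
    (Q : Set (ℝ × ℝ)) (hQ : Q = (Set.Icc a b) ×ˢ (Set.Ioo (0 : ℝ) 1)) :
    ∃ C : ℝ, 0 < C ∧
      ∀ ε ∈ Set.Ioo (0 : ℝ) 1, ∀ K H : ℝ → ℝ,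
        Measurable K → Measurable H →
        (∀ x ∈ Set.Icc a b, K₀ ≤ K x ∧ K x ≤ K₁) →
        (∀ x ∈ Set.Icc a b, 0 ≤ H x ∧ H x ≤ H₁) →
        ε ^ γ * H₁ ≤ K₀ →
        ∀ θ₂ : Set (ℝ × ℝ),
          θ₂ = {p : ℝ × ℝ | p.1 ∈ Set.Icc a b ∧
            1 - ε ^ γ * H p.1 / K p.1 < p.2 ∧ p.2 < 1} →
        ∀ f : ℝ × ℝ → ℝ, MemLp f 2 (volume.restrict Q) →
          (∫ p in θ₂, (f p) ^ 2) ≤ c * ε ^ γ →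
        ∀ (w : ℝ × ℝ → ℝ) (U : Set (ℝ × ℝ)), IsOpen U → closure Q ⊆ U →
          ContDiffOn ℝ 1 w U →
          (∫ p in Q,
              (K p.1 * (fderiv ℝ w p (1, 0)) ^ 2 +
                (1 / (ε ^ 2 * K p.1)) * (fderiv ℝ w p (0, 1)) ^ 2 +
                K p.1 * (w p) ^ 2) =
            (1 / ε ^ γ) * ∫ p in θ₂, K p.1 * f p * w p) →
          (∫ p in Q, (w p) ^ 2) ≤ C ∧
          (∫ p in Q, (fderiv ℝ w p (1, 0)) ^ 2) ≤ C ∧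
          (1 / ε ^ 2) * (∫ p in Q, (fderiv ℝ w p (0, 1)) ^ 2) ≤ C :=
  rectangle_anisotropic_a_priori_bounds_general a b γ c hc K₀ K₁ H₁ hK₀ hK₀₁ hH₁ Q hQ
end
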